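/- With notation as above, if the age $a(s;\theta,p) = n-r+\sum_{j=1}^{r-1}\{\theta_{p(j+1)}-\theta_{p(j)}\}+\{1-\theta_{p(1)}\}+\theta_{p(r)}$ equals $1$ and $\lambda \neq (1^n)$, then $r = n-1$ (so $\lambda = (2,1^{n-2})$) and $\theta = (0,0,\dots,0)$. -/

import Mathlib

/-!
All `θ_j` lie in `[0, 1)`, so every term of the age after `n - r` is nonnegative, while
`n - r ≥ 1` because some part of `λ` exceeds `1`. Age `1` therefore forces `n = r + 1` and
makes every other term vanish. A vanishing `{1 - θ_{p(1)}}` gives `θ_{p(1)} = 0`, and a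
vanishing `{θ_{p(j+1)} - θ_{p(j)}}` between numbers of `[0, 1)` gives `θ_{p(j+1)} = θ_{p(j)}`;
walking along `p` yields `θ = 0`.
-/

open Set

theorem Int.eq_of_fract_sub_eq_zero {R : Type*} [Ring R] [LinearOrder R] [IsStrictOrderedRing R]
    [FloorRing R] {x y : R} (hx : x ∈ Ico 0 1) (hy : y ∈ Ico 0 1) (h : Int.fract (x - y) = 0) :
    x = y := by
  obtain ⟨z, hz⟩ := Int.fract_eq_zero_iff.1 h
  have hxy : Int.fract x = Int.fract y := Int.fract_eq_fract.2 ⟨z, hz.symm⟩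
  rwa [Int.fract_eq_self.2 hx, Int.fract_eq_self.2 hy] at hxy

theorem Int.eq_zero_of_fract_one_sub_eq_zero {R : Type*} [Ring R] [LinearOrder R]
    [IsStrictOrderedRing R] [FloorRing R] {x : R} (hx : x ∈ Ico 0 1)
    (h : Int.fract (1 - x) = 0) : x = 0 := by
  refine (Int.eq_of_fract_sub_eq_zero ⟨le_rfl, one_pos⟩ hx ?_).symm
  rwa [← Int.fract_add_one, zero_sub, neg_add_eq_sub]

theorem natCast_div_mem_Ico {K : Type*} [Field K] [LinearOrder K] [IsStrictOrderedRing K]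
    {a l : ℕ} (h : a < l) : (a / l : K) ∈ Ico 0 1 :=
  ⟨by positivity, (div_lt_one (by exact_mod_cast a.zero_le.trans_lt h)).2 (by exact_mod_cast h)⟩

theorem Fintype.card_lt_sum_of_pos {ι : Type*} [Fintype ι] {f : ι → ℕ} (hpos : ∀ i, 0 < f i)
    (hne : ∃ i, f i ≠ 1) : Fintype.card ι < ∑ i, f i := by
  obtain ⟨i, hi⟩ := hne
  rw [Fintype.card_eq_sum_ones]
  exact Finset.sum_lt_sum (fun j _ => hpos j) ⟨i, Finset.mem_univ i, by have := hpos i; omega⟩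

theorem Fin.eq_of_forall_succ_eq {α : Type*} {r : ℕ} {f : Fin r → α} (hr : 0 < r)
    (h : ∀ (j : ℕ) (hj : j + 1 < r), f ⟨j + 1, hj⟩ = f ⟨j, by omega⟩) (i : Fin r) :
    f i = f ⟨0, hr⟩ := by
  obtain ⟨i, hi⟩ := i
  induction i with
  | zero => rfl
  | succ k ih => exact (h k hi).trans (ih _)

/-- With notation as in the age formula, if
`a(s;θ,p) = n - r + ∑_{j=1}^{r-1} {θ_{p(j+1)} - θ_{p(j)}} + {1 - θ_{p(1)}} + θ_{p(r)}`
equals `1` and `λ ≠ (1ⁿ)`, then `r = n - 1` (so `λ = (2,1^{n-2})`) and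
`θ = (0,0,…,0)`.  (Indices 0-indexed below.) -/
theorem stmt_13 (n r : ℕ) (hr : 0 < r) (lam : Fin r → ℕ) (hpos : ∀ j, 0 < lam j)
    (hsum : ∑ j, lam j = n)
    (a : Fin r → ℕ) (ha : ∀ j, a j < lam j)
    (θ : Fin r → ℚ) (hθ : ∀ j, θ j = (a j : ℚ) / (lam j : ℚ))
    (p : Equiv.Perm (Fin r))
    (hage : (n : ℚ) - (r : ℚ)
        + (∑ j : Fin (r - 1),
            Int.fract (θ (p ⟨(j : ℕ) + 1, by have := j.isLt; omega⟩)
              - θ (p ⟨(j : ℕ), by have := j.isLt; omega⟩)))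
        + Int.fract (1 - θ (p ⟨0, hr⟩)) + θ (p ⟨r - 1, by omega⟩) = 1)
    (hnontriv : ∃ j, lam j ≠ 1) :
    r = n - 1 ∧ ∀ j, θ j = 0 := by
  have hθI : ∀ j, θ j ∈ Ico 0 1 := fun j => hθ j ▸ natCast_div_mem_Ico (ha j)
  have hrn : r < n := by simpa [hsum] using Fintype.card_lt_sum_of_pos hpos hnontriv
  have hrnQ : (r : ℚ) + 1 ≤ n := by exact_mod_cast hrn
  have hterm_nonneg : ∀ j ∈ (Finset.univ : Finset (Fin (r - 1))),
      0 ≤ Int.fract (θ (p ⟨(j : ℕ) + 1, by have := j.isLt; omega⟩)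
        - θ (p ⟨(j : ℕ), by have := j.isLt; omega⟩)) := fun _ _ => Int.fract_nonneg _
  have hsum_nonneg := Finset.sum_nonneg hterm_nonneg
  have hfirst_nonneg := Int.fract_nonneg (1 - θ (p ⟨0, hr⟩))
  have hlast_nonneg := (hθI (p ⟨r - 1, by omega⟩)).1
  have hn : n = r + 1 := by exact_mod_cast (by linarith : (n : ℚ) = r + 1)
  have hbase : θ (p ⟨0, hr⟩) = 0 := Int.eq_zero_of_fract_one_sub_eq_zero (hθI _) (by linarith)
  have hstep (j : ℕ) (hj : j + 1 < r) : θ (p ⟨j + 1, hj⟩) = θ (p ⟨j, by omega⟩) :=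
    Int.eq_of_fract_sub_eq_zero (hθI _) (hθI _)
      ((Finset.sum_eq_zero_iff_of_nonneg hterm_nonneg).1 (by linarith) ⟨j, by omega⟩
        (Finset.mem_univ _))
  refine ⟨by omega, fun j => ?_⟩
  rw [← p.apply_symm_apply j, Fin.eq_of_forall_succ_eq (f := fun i => θ (p i)) hr hstep, hbase]
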